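/- Let a < b be reals and let U_n be an (n+1)-dimensional subspace of C^n([a,b],ℝ) possessing a non-negative Bernstein basis p_{n,0},…,p_{n,n}, and let f_0 ∈ U_n be strictly positive on [a,b] with D_{f_0}U_n := { (f/f_0)′ : f ∈ U_n } possessing a non-negative Bernstein basis q_{n-1,0},…,q_{n-1,n-1}. Let f_1 ∈ U_n be such that f_1/f_0 is strictly increasing on [a,b], write f_0 = Σ_{k=0}^n β_{n,k} p_{n,k} and f_1 = Σ_{k=0}^n γ_{n,k} p_{n,k}, assume β_{n,k} > 0 for all k, and define coefficients w_0,…,w_{n-1} by (f_1/f_0)′ = Σ_{k=0}^{n-1} w_k q_{n-1,k}. Then the sequence k ↦ γ_{n,k}/β_{n,k} is non-decreasing if and only if w_k ≥ 0 for all k = 0,…,n−1. -/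

import Mathlib

open Set Filter Topology

noncomputable section

/-- `p k`, `k = 0, …, n`, is a Bernstein basis of the `(n+1)`-dimensional subspace `U` of
`C^n([a,b], ℝ)`: it is a basis of `U` and each `p k` has a zero of order `k` at `a`
(derivatives of order `< k` vanish at `a`, the `k`-th does not) and a zero of order
`n - k` at `b`. -/
def IsBernsteinBasisOf (a b : ℝ) (n : ℕ) (U : Submodule ℝ (ℝ → ℝ))
    (p : Fin (n + 1) → ℝ → ℝ) : Prop :=
  (∀ k, p k ∈ U) ∧ LinearIndependent ℝ p ∧ Submodule.span ℝ (Set.range p) = U ∧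
  ∀ k : Fin (n + 1),
    (∀ j : ℕ, j < (k : ℕ) → iteratedDeriv j (p k) a = 0) ∧
    iteratedDeriv (k : ℕ) (p k) a ≠ 0 ∧
    (∀ j : ℕ, j < n - (k : ℕ) → iteratedDeriv j (p k) b = 0) ∧
    iteratedDeriv (n - (k : ℕ)) (p k) b ≠ 0

/-- `q k`, `k = 0, …, n-1`, is a Bernstein basis of the `n`-dimensional space
`D_{f₀}U = { (f/f₀)' : f ∈ U }`: every `q k` lies in `D_{f₀}U`, every element of `D_{f₀}U`
lies in the span of the `q k`, the family is linearly independent, and each `q k` has a zero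
of order `k` at `a` and a zero of order `n - 1 - k` at `b`. -/
def IsBernsteinBasisOfD (a b : ℝ) (n : ℕ) (f₀ : ℝ → ℝ) (U : Submodule ℝ (ℝ → ℝ))
    (q : Fin n → ℝ → ℝ) : Prop :=
  (∀ k, ∃ f ∈ U, q k = deriv (fun x => f x / f₀ x)) ∧
  (∀ f ∈ U, deriv (fun x => f x / f₀ x) ∈ Submodule.span ℝ (Set.range q)) ∧
  LinearIndependent ℝ q ∧
  ∀ k : Fin n,
    (∀ j : ℕ, j < (k : ℕ) → iteratedDeriv j (q k) a = 0) ∧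
    iteratedDeriv (k : ℕ) (q k) a ≠ 0 ∧
    (∀ j : ℕ, j < n - 1 - (k : ℕ) → iteratedDeriv j (q k) b = 0) ∧
    iteratedDeriv (n - 1 - (k : ℕ)) (q k) b ≠ 0

/-!
Write `r k = γ k / β k` and let `h k = ∑_{j > k} β j p j` be the tails of `f₀`. Abel summation
gives `f₁ = r 0 f₀ + ∑ₖ (r (k+1) - r k) h k`, hence `(f₁/f₀)' = ∑ₖ (r (k+1) - r k) (h k / f₀)'`.
Now `h k` vanishes to order `k + 1` at `a` and `f₀ - h k` to order `n - k` at `b`, so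
`(h k / f₀)' ∈ D_{f₀}U` vanishes to order `k` at `a` and `n - 1 - k` at `b`; comparing orders of
vanishing with those of the `q m` forces `(h k / f₀)' = C k q k`. As `h k / f₀` rises from `0`
at `a` to `1` at `b` and `q k ≥ 0`, the mean value theorem gives `C k > 0`. The coordinates of
`(f₁/f₀)'` in the basis `q` are unique, so `w k = (r (k+1) - r k) C k`.
-/

theorem eq_zero_of_triangular_of_sum_eq_zero {ι R : Type*} [Fintype ι] [Semiring R]
    [NoZeroDivisors R] {o : ι → ℕ} (ho : Function.Injective o) {A : ℕ → ι → R}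
    (hA : ∀ m, ∀ j < o m, A j m = 0) (hdiag : ∀ m, A (o m) m ≠ 0)
    {d : ι → R} {K : ℕ} (hd : ∀ j < K, ∑ m, d m * A j m = 0) {m : ι} (hm : o m < K) :
    d m = 0 := by
  induction hi : o m using Nat.strong_induction_on generalizing m with
  | _ i IH =>
    subst hi
    have hsum : ∑ m', d m' * A (o m) m' = d m * A (o m) m := by
      refine Finset.sum_eq_single m (fun m' _ hne => ?_) (by simp)
      rcases lt_or_gt_of_ne (ho.ne hne) with hlt | hgt
      · rw [IH (o m') hlt (hlt.trans hm) rfl, zero_mul]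
      · rw [hA m' _ hgt, mul_zero]
    have hdiag_eq := hd (o m) hm
    rw [hsum] at hdiag_eq
    exact (mul_eq_zero.mp hdiag_eq).resolve_right (hdiag m)

theorem Fin.sum_ite_castSucc_lt_sub_eq_sub {M : Type*} [AddCommGroup M] {n : ℕ}
    (r : Fin (n + 1) → M) (j : Fin (n + 1)) :
    ∑ k : Fin n, (if k.castSucc < j then r k.succ - r k.castSucc else 0) = r j - r 0 := by
  induction j using Fin.induction with
  | zero => simp
  | succ i ih =>
    have hfilter : Finset.univ.filter (fun k : Fin n => k.castSucc < i.succ) =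
        insert i (Finset.univ.filter fun k => k.castSucc < i.castSucc) := by
      ext k
      simp [Fin.castSucc_lt_succ_iff, le_iff_lt_or_eq, or_comm]
    rw [← Finset.sum_filter] at ih ⊢
    rw [hfilter, Finset.sum_insert (by simp), ih]
    abel

theorem Fin.sum_smul_eq_smul_sum_add_sum_sub_smul {R M : Type*} [Ring R] [AddCommGroup M]
    [Module R M] {n : ℕ} (r : Fin (n + 1) → R) (v : Fin (n + 1) → M) :
    ∑ j, r j • v j = r 0 • ∑ j, v j +
      ∑ k : Fin n, (r k.succ - r k.castSucc) • ∑ j, if k.castSucc < j then v j else 0 := by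
  simp_rw [Finset.smul_sum, smul_ite, smul_zero, ← ite_zero_smul]
  rw [Finset.sum_comm, ← Finset.sum_add_distrib]
  refine Finset.sum_congr rfl fun j _ => ?_
  rw [← Finset.sum_smul, Fin.sum_ite_castSucc_lt_sub_eq_sub, ← add_smul, add_sub_cancel]

theorem iteratedDeriv_mul_eq_zero {𝕜 : Type*} [NontriviallyNormedField 𝕜] {u v : 𝕜 → 𝕜}
    {x : 𝕜} {m : ℕ} (hu : ContDiffAt 𝕜 m u x) (hv : ContDiffAt 𝕜 m v x)
    (hux : ∀ i ≤ m, iteratedDeriv i u x = 0) :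
    iteratedDeriv m (fun y => u y * v y) x = 0 := by
  rw [iteratedDeriv_fun_mul hu hv]
  exact Finset.sum_eq_zero fun i hi => by
    rw [hux i (Nat.lt_succ_iff.mp (Finset.mem_range.mp hi)), mul_zero, zero_mul]

theorem iteratedDeriv_deriv_div_eq_zero {𝕜 : Type*} [NontriviallyNormedField 𝕜]
    {u v : 𝕜 → 𝕜} {x : 𝕜} {m j : ℕ} (hu : ContDiffAt 𝕜 m u x) (hv : ContDiffAt 𝕜 m v x)
    (hvx : v x ≠ 0) (hux : ∀ i < m, iteratedDeriv i u x = 0) (hj : j + 1 < m) :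
    iteratedDeriv j (deriv fun y => u y / v y) x = 0 := by
  have hle : ((j + 1 : ℕ) : WithTop ℕ∞) ≤ m := by exact_mod_cast hj.le
  rw [← iteratedDeriv_succ']
  simp only [div_eq_mul_inv]
  exact iteratedDeriv_mul_eq_zero (hu.of_le hle) ((hv.inv hvx).of_le hle)
    fun i hi => hux i (by omega)

theorem deriv_div_eventuallyEq_neg_deriv_sub_div {𝕜 : Type*} [NontriviallyNormedField 𝕜]
    {u v : 𝕜 → 𝕜} {x : 𝕜} (hv : ContinuousAt v x) (hvx : v x ≠ 0) :
    deriv (fun y => u y / v y) =ᶠ[𝓝 x] fun y => -deriv (fun y => (v y - u y) / v y) y := by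
  filter_upwards [eventually_eventually_nhds.mpr (hv.eventually_ne hvx)] with y hy
  have hEq : (fun y => u y / v y) =ᶠ[𝓝 y] fun y => 1 - (v y - u y) / v y := by
    filter_upwards [hy] with z hz
    field_simp
    ring
  rw [hEq.deriv_eq, deriv_const_sub]

theorem iteratedDeriv_sum_mul_eq_zero {𝕜 ι : Type*} [NontriviallyNormedField 𝕜] {s : Finset ι}
    {c : ι → 𝕜} {p : ι → 𝕜 → 𝕜} {x : 𝕜} {i : ℕ} (hp : ∀ j ∈ s, ContDiffAt 𝕜 i (p j) x)
    (hzero : ∀ j ∈ s, c j = 0 ∨ iteratedDeriv i (p j) x = 0) :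
    iteratedDeriv i (fun y => ∑ j ∈ s, c j * p j y) x = 0 := by
  rw [iteratedDeriv_fun_sum fun j hj => contDiffAt_const.mul (hp j hj)]
  refine Finset.sum_eq_zero fun j hj => ?_
  rw [iteratedDeriv_const_mul_field]
  rcases hzero j hj with h | h <;> simp [h]

theorem eq_zero_of_iteratedDeriv_sum_mul_eq_zero {𝕜 ι : Type*} [NontriviallyNormedField 𝕜]
    [Fintype ι] {q : ι → 𝕜 → 𝕜} {x : 𝕜} {o : ι → ℕ} (ho : Function.Injective o)
    (hzero : ∀ m, ∀ j < o m, iteratedDeriv j (q m) x = 0)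
    (hne : ∀ m, iteratedDeriv (o m) (q m) x ≠ 0)
    {N K : ℕ} (hq : ∀ m, ContDiffAt 𝕜 N (q m) x) (hK : K ≤ N + 1) {c : ι → 𝕜}
    (hc : ∀ j < K, iteratedDeriv j (fun y => ∑ m, c m * q m y) x = 0)
    {m : ι} (hm : o m < K) : c m = 0 := by
  refine eq_zero_of_triangular_of_sum_eq_zero ho (A := fun j m => iteratedDeriv j (q m) x)
    hzero hne (fun j hj => ?_) hm
  rw [← hc j hj, iteratedDeriv_fun_sum fun m _ =>
    contDiffAt_const.mul ((hq m).of_le (by exact_mod_cast (by omega : j ≤ N)))]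
  simp only [iteratedDeriv_const_mul_field]

theorem pos_of_deriv_eq_mul_of_lt {g q : ℝ → ℝ} {a b c : ℝ} (hab : a < b)
    (hgc : ContinuousOn g (Icc a b)) (hgd : DifferentiableOn ℝ g (Ioo a b))
    (hg : ∀ x ∈ Ioo a b, deriv g x = c * q x) (hq : ∀ x ∈ Ioo a b, 0 ≤ q x) (hlt : g a < g b) :
    0 < c := by
  obtain ⟨ξ, hξ, hslope⟩ := exists_deriv_eq_slope g hab hgc hgd
  have hpos : 0 < c * q ξ := by
    rw [← hg ξ hξ, hslope]
    exact div_pos (sub_pos.mpr hlt) (sub_pos.mpr hab)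
  exact pos_of_mul_pos_left hpos (hq ξ hξ)

theorem deriv_div_eq_sum_mul {𝕜 ι : Type*} [NontriviallyNormedField 𝕜] {s : Finset ι}
    {f f₀ : 𝕜 → 𝕜} {h : ι → 𝕜 → 𝕜} {r : 𝕜} {c : ι → 𝕜} {x : 𝕜}
    (hf : ∀ y, f y = r * f₀ y + ∑ k ∈ s, c k * h k y) (hf₀ : ∀ᶠ y in 𝓝 x, f₀ y ≠ 0)
    (hh : ∀ k ∈ s, DifferentiableAt 𝕜 (fun y => h k y / f₀ y) x) :
    deriv (fun y => f y / f₀ y) x = ∑ k ∈ s, c k * deriv (fun y => h k y / f₀ y) x := by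
  have hEq : (fun y => f y / f₀ y) =ᶠ[𝓝 x] fun y => r + ∑ k ∈ s, c k * (h k y / f₀ y) := by
    filter_upwards [hf₀] with y hy
    rw [hf, add_div, Finset.sum_div, mul_div_cancel_right₀ _ hy]
    simp only [mul_div_assoc]
  rw [hEq.deriv_eq, deriv_const_add, deriv_fun_sum fun k hk => (hh k hk).const_mul _]
  exact Finset.sum_congr rfl fun k hk => deriv_const_mul _ (hh k hk)

section BernsteinBasis

variable {a b : ℝ} {n : ℕ} {U : Submodule ℝ (ℝ → ℝ)} {f₀ : ℝ → ℝ}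

theorem contDiffAt_div_of_mem (hUsmooth : ∀ f ∈ U, ContDiff ℝ (n : ℕ∞) f) (hf₀U : f₀ ∈ U)
    {f : ℝ → ℝ} (hf : f ∈ U) {x : ℝ} (hx : f₀ x ≠ 0) :
    ContDiffAt ℝ (n : ℕ∞) (fun y => f y / f₀ y) x :=
  (hUsmooth f hf).contDiffAt.div (hUsmooth f₀ hf₀U).contDiffAt hx

namespace IsBernsteinBasisOf

variable {p : Fin (n + 1) → ℝ → ℝ}

theorem sum_mul_mem (hp : IsBernsteinBasisOf a b n U p) (c : Fin (n + 1) → ℝ) :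
    (fun y => ∑ j, c j * p j y) ∈ U := by
  have hsum : (fun y => ∑ j, c j * p j y) = ∑ j, c j • p j := by
    ext y
    simp
  rw [hsum]
  exact U.sum_mem fun j _ => U.smul_mem _ (hp.1 j)

theorem iteratedDeriv_sum_mul_eq_zero_at_left (hUsmooth : ∀ f ∈ U, ContDiff ℝ (n : ℕ∞) f)
    (hp : IsBernsteinBasisOf a b n U p) {c : Fin (n + 1) → ℝ} {i : ℕ} (hi : i ≤ n)
    (hc : ∀ j : Fin (n + 1), (j : ℕ) ≤ i → c j = 0) :
    iteratedDeriv i (fun y => ∑ j, c j * p j y) a = 0 :=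
  iteratedDeriv_sum_mul_eq_zero
    (fun j _ => (hUsmooth _ (hp.1 j)).contDiffAt.of_le (by exact_mod_cast hi))
    fun j _ => (le_or_gt (j : ℕ) i).imp (hc j) fun hij => (hp.2.2.2 j).1 i hij

theorem iteratedDeriv_sum_mul_eq_zero_at_right (hUsmooth : ∀ f ∈ U, ContDiff ℝ (n : ℕ∞) f)
    (hp : IsBernsteinBasisOf a b n U p) {c : Fin (n + 1) → ℝ} {i : ℕ} (hi : i ≤ n)
    (hc : ∀ j : Fin (n + 1), n - (j : ℕ) ≤ i → c j = 0) :
    iteratedDeriv i (fun y => ∑ j, c j * p j y) b = 0 :=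
  iteratedDeriv_sum_mul_eq_zero
    (fun j _ => (hUsmooth _ (hp.1 j)).contDiffAt.of_le (by exact_mod_cast hi))
    fun j _ => (le_or_gt (n - (j : ℕ)) i).imp (hc j) fun hij => (hp.2.2.2 j).2.2.1 i hij

end IsBernsteinBasisOf

namespace IsBernsteinBasisOfD

variable {q : Fin n → ℝ → ℝ}

theorem contDiffAt (hUsmooth : ∀ f ∈ U, ContDiff ℝ (n : ℕ∞) f) (hf₀U : f₀ ∈ U)
    (hq : IsBernsteinBasisOfD a b n f₀ U q) (m : Fin n) {x : ℝ} (hx : f₀ x ≠ 0) :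
    ContDiffAt ℝ (n - 1 : ℕ) (q m) x := by
  obtain ⟨f, hf, hqm⟩ := hq.1 m
  rw [hqm]
  exact (contDiffAt_div_of_mem hUsmooth hf₀U hf hx).derivWithin
    (by rw [← Nat.cast_add_one, Nat.sub_add_cancel m.pos]; rfl)

theorem eq_of_sum_mul_eventuallyEq (hUsmooth : ∀ f ∈ U, ContDiff ℝ (n : ℕ∞) f)
    (hf₀U : f₀ ∈ U) (hq : IsBernsteinBasisOfD a b n f₀ U q) (hf₀a : f₀ a ≠ 0)
    {c d : Fin n → ℝ}
    (h : (fun y => ∑ m, c m * q m y) =ᶠ[𝓝 a] fun y => ∑ m, d m * q m y) : c = d := by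
  have hzero : (fun y => ∑ m, (c - d) m * q m y) =ᶠ[𝓝 a] fun _ => 0 := by
    filter_upwards [h] with y hy
    simp [sub_mul, Finset.sum_sub_distrib, hy]
  funext m
  refine sub_eq_zero.mp <| eq_zero_of_iteratedDeriv_sum_mul_eq_zero (o := Fin.val) (c := c - d)
    Fin.val_injective (fun m => (hq.2.2.2 m).1) (fun m => (hq.2.2.2 m).2.1)
    (fun m => hq.contDiffAt hUsmooth hf₀U m hf₀a) (K := n) (Nat.sub_add_cancel m.pos).ge
    (fun j _ => by rw [hzero.iteratedDeriv_eq]; simp) m.isLt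

theorem exists_deriv_div_eq_mul (hUsmooth : ∀ f ∈ U, ContDiff ℝ (n : ℕ∞) f) (hf₀U : f₀ ∈ U)
    (hq : IsBernsteinBasisOfD a b n f₀ U q) (hf₀a : f₀ a ≠ 0) (hf₀b : f₀ b ≠ 0)
    {h : ℝ → ℝ} (hh : h ∈ U) (k : Fin n)
    (ha : ∀ i < (k : ℕ) + 1, iteratedDeriv i h a = 0)
    (hb : ∀ i < n - (k : ℕ), iteratedDeriv i (fun y => f₀ y - h y) b = 0) :
    ∃ C, ∀ x, deriv (fun y => h y / f₀ y) x = C * q k x := by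
  obtain ⟨c, hc⟩ := (Submodule.mem_span_range_iff_exists_fun ℝ).mp (hq.2.1 h hh)
  have hderiv : deriv (fun y => h y / f₀ y) = fun y => ∑ m, c m * q m y := by
    rw [← hc]
    ext y
    simp
  have hsmooth {g : ℝ → ℝ} (hg : g ∈ U) {x : ℝ} {i : ℕ} (hi : i ≤ n) : ContDiffAt ℝ i g x :=
    (hUsmooth g hg).contDiffAt.of_le (by exact_mod_cast hi)
  have hlow : ∀ m : Fin n, (m : ℕ) < k → c m = 0 := fun m hm =>
    eq_zero_of_iteratedDeriv_sum_mul_eq_zero (o := Fin.val) Fin.val_injective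
      (fun m => (hq.2.2.2 m).1) (fun m => (hq.2.2.2 m).2.1)
      (fun m => hq.contDiffAt hUsmooth hf₀U m hf₀a) (K := k) (by omega)
      (fun j hj => hderiv ▸ iteratedDeriv_deriv_div_eq_zero (hsmooth hh k.isLt)
        (hsmooth hf₀U k.isLt) hf₀a ha (by omega)) hm
  have hhigh : ∀ m : Fin n, k < m → c m = 0 := fun m hm =>
    eq_zero_of_iteratedDeriv_sum_mul_eq_zero (o := fun m : Fin n => n - 1 - m)
      (fun m₁ m₂ h => Fin.ext (by have := m₁.isLt; have := m₂.isLt; simp only at h; omega))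
      (fun m => (hq.2.2.2 m).2.2.1) (fun m => (hq.2.2.2 m).2.2.2)
      (fun m => hq.contDiffAt hUsmooth hf₀U m hf₀b) (K := n - 1 - k) (by omega)
      (fun j hj => by
        rw [← hderiv, (deriv_div_eventuallyEq_neg_deriv_sub_div
          (hUsmooth f₀ hf₀U).continuous.continuousAt hf₀b).iteratedDeriv_eq, iteratedDeriv_fun_neg,
          iteratedDeriv_deriv_div_eq_zero (u := fun y => f₀ y - h y)
            (hsmooth (U.sub_mem hf₀U hh) (Nat.sub_le n k)) (hsmooth hf₀U (Nat.sub_le n k)) hf₀b hb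
            (by omega), neg_zero])
      (by omega)
  refine ⟨c k, fun x => ?_⟩
  rw [hderiv]
  refine Finset.sum_eq_single k (fun m _ hmk => ?_) (by simp)
  rcases lt_or_gt_of_ne hmk with hm | hm
  · rw [hlow m hm, zero_mul]
  · rw [hhigh m hm, zero_mul]

theorem exists_pos_deriv_div_eq_mul (hab : a < b) (hUsmooth : ∀ f ∈ U, ContDiff ℝ (n : ℕ∞) f)
    (hf₀U : f₀ ∈ U) (hf₀pos : ∀ x ∈ Icc a b, 0 < f₀ x) (hq : IsBernsteinBasisOfD a b n f₀ U q)
    (hqnn : ∀ k, ∀ x ∈ Icc a b, 0 ≤ q k x) {h : ℝ → ℝ} (hh : h ∈ U) (k : Fin n)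
    (ha : ∀ i < (k : ℕ) + 1, iteratedDeriv i h a = 0)
    (hb : ∀ i < n - (k : ℕ), iteratedDeriv i (fun y => f₀ y - h y) b = 0) :
    ∃ C > 0, ∀ x, deriv (fun y => h y / f₀ y) x = C * q k x := by
  have hf₀a := (hf₀pos a (left_mem_Icc.mpr hab.le)).ne'
  have hf₀b := (hf₀pos b (right_mem_Icc.mpr hab.le)).ne'
  obtain ⟨C, hC⟩ := hq.exists_deriv_div_eq_mul hUsmooth hf₀U hf₀a hf₀b hh k ha hb
  have hsmooth : ∀ x ∈ Icc a b, ContDiffAt ℝ (n : ℕ∞) (fun y => h y / f₀ y) x :=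
    fun x hx => contDiffAt_div_of_mem hUsmooth hf₀U hh (hf₀pos x hx).ne'
  have hn : ((n : ℕ∞) : WithTop ℕ∞) ≠ 0 := by exact_mod_cast k.pos.ne'
  have hha : h a = 0 := by simpa using ha 0 (by omega)
  have hhb : h b = f₀ b := by
    have := hb 0 (by omega)
    simp only [iteratedDeriv_zero] at this
    linarith
  refine ⟨C, pos_of_deriv_eq_mul_of_lt hab
    (fun x hx => (hsmooth x hx).continuousAt.continuousWithinAt)
    (fun x hx => ((hsmooth x (Ioo_subset_Icc_self hx)).differentiableAt hn).differentiableWithinAt)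
    (fun x _ => hC x) (fun x hx => hqnn k x (Ioo_subset_Icc_self hx)) ?_, hC⟩
  rw [hha, hhb, zero_div, div_self hf₀b]
  exact one_pos

end IsBernsteinBasisOfD

theorem exists_pos_deriv_tail_div_eq_mul {p : Fin (n + 1) → ℝ → ℝ} {q : Fin n → ℝ → ℝ}
    {β : Fin (n + 1) → ℝ} (hab : a < b) (hUsmooth : ∀ f ∈ U, ContDiff ℝ (n : ℕ∞) f)
    (hp : IsBernsteinBasisOf a b n U p) (hf₀U : f₀ ∈ U) (hf₀pos : ∀ x ∈ Icc a b, 0 < f₀ x)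
    (hq : IsBernsteinBasisOfD a b n f₀ U q) (hqnn : ∀ k, ∀ x ∈ Icc a b, 0 ≤ q k x)
    (hβ : ∀ x, f₀ x = ∑ k, β k * p k x) (k : Fin n) :
    ∃ C > 0, ∀ x, deriv (fun y => (∑ j, (if k.castSucc < j then β j else 0) * p j y) / f₀ y) x
      = C * q k x := by
  have hcompl : (fun y => f₀ y - ∑ j, (if k.castSucc < j then β j else 0) * p j y) =
      fun y => ∑ j, (if k.castSucc < j then 0 else β j) * p j y := by
    ext y
    simp only [hβ, ← Finset.sum_sub_distrib, ← sub_mul]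
    congr! 2 with j
    split_ifs <;> ring
  refine hq.exists_pos_deriv_div_eq_mul hab hUsmooth hf₀U hf₀pos hqnn (hp.sum_mul_mem _) k
    (fun i hi => hp.iteratedDeriv_sum_mul_eq_zero_at_left hUsmooth (by omega)
      fun j hj => if_neg (by rw [Fin.lt_def, Fin.val_castSucc]; omega))
    (fun i hi => hcompl ▸ hp.iteratedDeriv_sum_mul_eq_zero_at_right hUsmooth (by omega)
      fun j hj => if_pos (by rw [Fin.lt_def, Fin.val_castSucc]; omega))

end BernsteinBasis

theorem ratio_monotone_iff_w_nonneg
    (n : ℕ) (a b : ℝ) (hab : a < b)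
    (U : Submodule ℝ (ℝ → ℝ))
    (hUsmooth : ∀ f ∈ U, ContDiff ℝ (n : ℕ∞) f)
    (p : Fin (n + 1) → ℝ → ℝ)
    (hp : IsBernsteinBasisOf a b n U p)
    (f₀ f₁ : ℝ → ℝ) (hf₀U : f₀ ∈ U)
    (hf₀pos : ∀ x ∈ Set.Icc a b, 0 < f₀ x)
    (q : Fin n → ℝ → ℝ)
    (hq : IsBernsteinBasisOfD a b n f₀ U q)
    (hqnn : ∀ k, ∀ x ∈ Set.Icc a b, 0 ≤ q k x)
    (β γ : Fin (n + 1) → ℝ)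
    (hβ : ∀ x, f₀ x = ∑ k, β k * p k x)
    (hγ : ∀ x, f₁ x = ∑ k, γ k * p k x)
    (hβpos : ∀ k, 0 < β k)
    (w : Fin n → ℝ)
    (hw : ∀ x, deriv (fun y => f₁ y / f₀ y) x = ∑ k, w k * q k x) :
    (Monotone fun k => γ k / β k) ↔ ∀ k, 0 ≤ w k := by
  choose C hCpos hC using fun k =>
    exists_pos_deriv_tail_div_eq_mul hab hUsmooth hp hf₀U hf₀pos hq hqnn hβ k
  set r : Fin (n + 1) → ℝ := fun j => γ j / β j
  set tail : Fin n → ℝ → ℝ := fun k y => ∑ j, (if k.castSucc < j then β j else 0) * p j y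
  have habel (y : ℝ) : f₁ y = r 0 * f₀ y + ∑ k, (r k.succ - r k.castSucc) * tail k y := by
    have hγr (j : Fin (n + 1)) : γ j * p j y = r j * (β j * p j y) := by
      rw [← mul_assoc, div_mul_cancel₀ _ (hβpos j).ne']
    simpa only [hγ, hβ, hγr, tail, ite_zero_mul, smul_eq_mul] using
      Fin.sum_smul_eq_smul_sum_add_sum_sub_smul r fun j => β j * p j y
  have hf₀a : f₀ a ≠ 0 := (hf₀pos a (left_mem_Icc.mpr hab.le)).ne'
  have hw_eq : w = fun k => (r k.succ - r k.castSucc) * C k := by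
    refine hq.eq_of_sum_mul_eventuallyEq hUsmooth hf₀U hf₀a ?_
    filter_upwards [eventually_eventually_nhds.mpr
      ((hUsmooth f₀ hf₀U).continuous.continuousAt.eventually_ne hf₀a)] with y hy
    rw [← hw, deriv_div_eq_sum_mul habel hy fun k _ =>
      (contDiffAt_div_of_mem hUsmooth hf₀U (hp.sum_mul_mem _) hy.self_of_nhds).differentiableAt
        (by exact_mod_cast k.pos.ne')]
    simp only [tail, hC, mul_assoc]
  rw [Fin.monotone_iff_le_succ, hw_eq]
  exact forall_congr' fun k => by rw [mul_nonneg_iff_of_pos_right (hCpos k), sub_nonneg]
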